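/- Let (X, π) be a compact Hausdorff pretopological space, f : X → Y a surjection onto a set Y such that f⁻(y) is cover-compact for each y ∈ Y, and let σ be the θ-quotient convergence on Y (F →_σ y iff f⁻(F) is compact at f⁻(y)). Then for any filter F on Y, F →_σ y if and only if f⁻(F) ⊇ V_π(f⁻(y)), where V_π(f⁻(y)) is the filter of vicinities of f⁻(y). -/

import Mathlib

open Set Filter

/-- A pretopological space: a vicinity filter at each point containing the point. -/
structure Pretop (X : Type*) where
  V : X → Filter X
  pure_le : ∀ x : X, (pure x : Filter X) ≤ V x

/-- Two filters meet (`F # G`). -/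
def Meets {X : Type*} (F G : Filter X) : Prop :=
  ∀ A ∈ F, ∀ B ∈ G, (A ∩ B).Nonempty

namespace Pretop

variable {X Y : Type*} (π : Pretop X)

/-- Convergence: `F → x` iff `F ⊇ V x`. -/
def Conv (F : Filter X) (x : X) : Prop := F ≤ π.V x

/-- Adherence of a filter. -/
def adh (F : Filter X) : Set X := {x | Meets (π.V x) F}

/-- Adherence of a set (adherence of its principal filter). -/
def adhS (A : Set X) : Set X := {x | ∀ U ∈ π.V x, (U ∩ A).Nonempty}

/-- Inherence of a set. -/
def inh (A : Set X) : Set X := (π.adhS Aᶜ)ᶜ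

/-- A compact pretopological space: every proper filter has nonempty adherence. -/
def IsCompactPre : Prop := ∀ F : Filter X, F.NeBot → (π.adh F).Nonempty

/-- Hausdorff: distinct points have disjoint vicinities. -/
def HausdorffPre : Prop :=
  ∀ x y : X, x ≠ y → ∃ U ∈ π.V x, ∃ W ∈ π.V y, U ∩ W = ∅

/-- `F` is compact at `A`: every filter meeting `F` has adherence meeting `A`. -/
def CompactAt (F : Filter X) (A : Set X) : Prop :=
  ∀ G : Filter X, Meets G F → (π.adh G ∩ A).Nonempty

/-- A cover of `A`: every point of `A` has a member of `C` as a vicinity. -/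
def IsCover (C : Set (Set X)) (A : Set X) : Prop :=
  ∀ x ∈ A, ∃ U ∈ C, U ∈ π.V x

/-- Cover-compactness. -/
def CoverCompact (A : Set X) : Prop :=
  ∀ C : Set (Set X), π.IsCover C A →
    ∃ D : Finset (Set X), ↑D ⊆ C ∧ A ⊆ π.inh (⋃ U ∈ D, U)

lemma mem_of_vicinity {x : X} {U : Set X} (h : U ∈ π.V x) : x ∈ U := π.pure_le x h

lemma subset_adhS (A : Set X) : A ⊆ π.adhS A :=
  fun x hx U hU => ⟨x, π.mem_of_vicinity hU, hx⟩

lemma adhS_mono {A B : Set X} (h : A ⊆ B) : π.adhS A ⊆ π.adhS B :=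
  fun x hx U hU => (hx U hU).imp fun y hy => ⟨hy.1, h hy.2⟩

lemma adhS_empty : π.adhS (∅ : Set X) = ∅ := by
  ext x
  simp only [adhS, mem_setOf_eq, Set.inter_empty, Set.mem_empty_iff_false, iff_false]
  intro h
  simpa using h univ univ_mem

lemma adhS_union (A B : Set X) : π.adhS (A ∪ B) = π.adhS A ∪ π.adhS B := by
  apply Subset.antisymm
  · intro x hx
    by_contra hc
    simp only [Set.mem_union, not_or] at hc
    obtain ⟨h1, h2⟩ := hc
    simp only [adhS, mem_setOf_eq, not_forall] at h1 h2
    obtain ⟨U, hU, hUA⟩ := h1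
    obtain ⟨W, hW, hWB⟩ := h2
    obtain ⟨z, hz⟩ := hx (U ∩ W) (inter_mem hU hW)
    rcases hz.2 with hA | hB
    · exact hUA ⟨z, hz.1.1, hA⟩
    · exact hWB ⟨z, hz.1.2, hB⟩
  · exact Set.union_subset (π.adhS_mono Set.subset_union_left)
      (π.adhS_mono Set.subset_union_right)

lemma inh_mono {A B : Set X} (h : A ⊆ B) : π.inh A ⊆ π.inh B :=
  Set.compl_subset_compl.mpr (π.adhS_mono (Set.compl_subset_compl.mpr h))

lemma inh_inter (A B : Set X) : π.inh (A ∩ B) = π.inh A ∩ π.inh B := by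
  simp only [inh, Set.compl_inter, adhS_union, Set.compl_union]

lemma inh_univ : π.inh (univ : Set X) = univ := by
  simp [inh, adhS_empty]

lemma inh_subset (A : Set X) : π.inh A ⊆ A := by
  intro x hx
  by_contra hxA
  exact hx (π.subset_adhS Aᶜ hxA)

/-- The filter `F¹` of members of `F` whose inherence also belongs to `F`. -/
def F1 (F : Filter X) : Filter X where
  sets := {A | A ∈ F ∧ π.inh A ∈ F}
  univ_sets := ⟨univ_mem, by rw [π.inh_univ]; exact univ_mem⟩
  sets_of_superset := fun hA hAB =>
    ⟨mem_of_superset hA.1 hAB, mem_of_superset hA.2 (π.inh_mono hAB)⟩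
  inter_sets := fun hA hB =>
    ⟨inter_mem hA.1 hB.1, by rw [π.inh_inter]; exact inter_mem hA.2 hB.2⟩

lemma mem_F1 {F : Filter X} {A : Set X} : A ∈ π.F1 F ↔ A ∈ F ∧ π.inh A ∈ F := Iff.rfl

/-- The partial regularization `rπ`: vicinities generated by adherences of vicinities. -/
def rpre : Pretop X where
  V x := (π.V x).lift' π.adhS
  pure_le x := le_lift'.mpr fun U hU =>
    mem_pure.mpr (π.subset_adhS U (π.mem_of_vicinity hU))

lemma mem_rpre {x : X} {A : Set X} :
    A ∈ (π.rpre).V x ↔ ∃ U ∈ π.V x, π.adhS U ⊆ A :=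
  mem_lift'_sets fun _ _ h => π.adhS_mono h

end Pretop

/-- Continuity of maps between pretopological spaces. -/
def ContPre {X Y : Type*} (π : Pretop X) (τ : Pretop Y) (f : X → Y) : Prop :=
  ∀ x : X, ∀ W ∈ τ.V (f x), ∃ U ∈ π.V x, f '' U ⊆ W

/-- Perfect maps between pretopological spaces. -/
def PerfectPre {X Y : Type*} (π : Pretop X) (τ : Pretop Y) (f : X → Y) : Prop :=
  ∀ (F : Filter Y) (y : Y), τ.Conv F y → π.CompactAt (F.comap f) (f ⁻¹' {y})

/-- The filter of vicinities of a set `A`. -/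
def VSet {X : Type*} (π : Pretop X) (A : Set X) : Filter X where
  sets := {V | A ⊆ π.inh V}
  univ_sets := by simp [π.inh_univ]
  sets_of_superset := fun h hsub => h.trans (π.inh_mono hsub)
  inter_sets := fun h1 h2 => by
    rw [Set.mem_setOf_eq, π.inh_inter]; exact Set.subset_inter h1 h2

lemma mem_VSet {X : Type*} {π : Pretop X} {A V : Set X} :
    V ∈ VSet π A ↔ A ⊆ π.inh V := Iff.rfl

/-- `f^#[A] = {y : f⁻¹(y) ⊆ A}`. -/
def fsharp {X Y : Type*} (f : X → Y) (A : Set X) : Set Y := {y | f ⁻¹' {y} ⊆ A}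

/-- The θ-quotient pretopology on `Y`. -/
def thetaQuot {X Y : Type*} (π : Pretop X) (f : X → Y) : Pretop Y where
  V y := (VSet π (f ⁻¹' {y})).lift' (fsharp f)
  pure_le y := le_lift'.mpr fun V hV =>
    mem_pure.mpr (fun x hx => π.inh_subset V ((mem_VSet.mp hV) hx))

/-- Strong irreducibility. -/
def StronglyIrreducible {X Y : Type*} (π : Pretop X) (f : X → Y) : Prop :=
  ∀ U V : Set X, (π.inh U).Nonempty → (π.inh V).Nonempty → (U ∩ V).Nonempty →
    ∃ y : Y, f ⁻¹' {y} ⊆ U ∩ V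

/-- The simple extension `Y⁺` determined by a dense subset `S`. -/
def extPlus {X : Type*} (ρ : Pretop X) (S : Set X) : Pretop X where
  V p := (ρ.V p).lift' (fun W => insert p (W ∩ S))
  pure_le p := le_lift'.mpr fun W _ => mem_pure.mpr (Set.mem_insert p _)

/-- `o(A) = {p : ∃ W ∈ V(p), W ∩ S = A}`. -/
def oSet {X : Type*} (ρ : Pretop X) (S : Set X) (A : Set X) : Set X :=
  {p | ∃ W ∈ ρ.V p, W ∩ S = A}

/-- The strict extension `Y^#` determined by a dense subset `S`. -/
def extSharp {X : Type*} (ρ : Pretop X) (S : Set X) : Pretop X where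
  V p := (ρ.V p).lift' (fun W => oSet ρ S (W ∩ S))
  pure_le p := le_lift'.mpr fun W hW => mem_pure.mpr ⟨W, hW, rfl⟩

/-- The θ-pretopology of a topological space: vicinities are closed neighborhoods. -/
def theta (X : Type*) [TopologicalSpace X] : Pretop X where
  V x := (nhds x).lift' closure
  pure_le x := le_lift'.mpr fun U hU =>
    mem_pure.mpr (subset_closure (mem_of_mem_nhds hU))

/-!
A filter `F` compact at `A` contains every vicinity `V` of `A`: otherwise `𝓟 Vᶜ` meets `F`, so it
adheres at some point of `A`, where `V` is a vicinity. Conversely, if `A` is cover-compact and `F`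
contains the vicinities of `A`, a filter `G` meeting `F` without adherent points in `A` makes
`{U | Uᶜ ∈ G}` a cover of `A`; the union of a finite subcover is a vicinity of `A`, hence lies in
`F`, while its complement lies in `G`.
-/

namespace Pretop

variable {X : Type*} (π : Pretop X)

lemma mem_inh_iff {A : Set X} {x : X} : x ∈ π.inh A ↔ A ∈ π.V x := by
  simp only [inh, adhS, mem_compl_iff, mem_ofPred_eq, not_forall, exists_prop]
  refine ⟨fun ⟨U, hU, hUA⟩ => mem_of_superset hU fun z hzU => ?_, fun hA => ⟨A, hA, ?_⟩⟩
  · by_contra hzA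
    exact hUA ⟨z, hzU, hzA⟩
  · rintro ⟨z, hzA, hzA'⟩
    exact hzA' hzA

lemma mem_adh_iff {G : Filter X} {x : X} : x ∈ π.adh G ↔ ∀ U ∈ π.V x, Uᶜ ∉ G := by
  simp only [adh, Meets, mem_ofPred_eq]
  refine forall₂_congr fun U _ => ⟨fun h hU => ?_, fun h B hB => ?_⟩
  · obtain ⟨z, hzU, hzU'⟩ := h _ hU
    exact hzU' hzU
  · by_contra hUB
    exact h (mem_of_superset hB fun z hzB hzU => hUB ⟨z, hzU, hzB⟩)

lemma meets_principal_compl_of_notMem {F : Filter X} {V : Set X} (hV : V ∉ F) :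
    Meets (𝓟 Vᶜ) F := by
  intro S hS B hB
  by_contra! hSB
  refine hV (mem_of_superset hB fun x hxB => ?_)
  by_contra hxV
  exact hSB.subset ⟨hS hxV, hxB⟩

lemma le_VSet_of_compactAt {F : Filter X} {A : Set X} (hF : π.CompactAt F A) :
    F ≤ VSet π A := by
  intro V hV
  by_contra hVF
  obtain ⟨x, hx, hxA⟩ := hF _ (meets_principal_compl_of_notMem hVF)
  exact (π.mem_adh_iff.mp hx) V (π.mem_inh_iff.mp (hV hxA)) (mem_principal_self _)

lemma compactAt_of_le_VSet {F : Filter X} {A : Set X} (hA : π.CoverCompact A)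
    (hF : F ≤ VSet π A) : π.CompactAt F A := by
  intro G hGF
  by_contra hGA
  have hcover : π.IsCover {U | Uᶜ ∈ G} A := fun x hxA => by
    have hx : x ∉ π.adh G := fun hx => hGA ⟨x, hx, hxA⟩
    simpa [mem_adh_iff, and_comm] using hx
  obtain ⟨D, hDC, hAD⟩ := hA _ hcover
  have hcompl : (⋃ U ∈ D, U)ᶜ ∈ G := by
    rw [compl_iUnion₂]
    exact (biInter_finset_mem D).2 fun U hU => hDC hU
  obtain ⟨z, hz, hz'⟩ := hGF _ hcompl _ (hF hAD)
  exact hz hz'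

end Pretop

theorem thetaQuot_conv_iff_general {X Y : Type*} (π : Pretop X) (f : X → Y)
    (hfib : ∀ y : Y, π.CoverCompact (f ⁻¹' {y}))
    (F : Filter Y) (y : Y) :
    π.CompactAt (F.comap f) (f ⁻¹' {y}) ↔
      ∀ V : Set X, f ⁻¹' {y} ⊆ π.inh V → V ∈ F.comap f :=
  ⟨fun h _ hV => π.le_VSet_of_compactAt h hV,
    fun h => π.compactAt_of_le_VSet (hfib y) fun V hV => h V hV⟩

/-- For the θ-quotient convergence: `F →_σ y` (i.e. `f⁻(F)` is compact at `f⁻(y)`)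
iff `f⁻(F)` contains every vicinity of the fiber `f⁻(y)`. -/
theorem thetaQuot_conv_iff {X Y : Type*} (π : Pretop X) (f : X → Y)
    (hc : π.IsCompactPre) (hH : π.HausdorffPre) (hs : Function.Surjective f)
    (hfib : ∀ y : Y, π.CoverCompact (f ⁻¹' {y}))
    (F : Filter Y) (y : Y) :
    π.CompactAt (F.comap f) (f ⁻¹' {y}) ↔
      ∀ V : Set X, f ⁻¹' {y} ⊆ π.inh V → V ∈ F.comap f :=
  thetaQuot_conv_iff_general π f hfib F y
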